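/- arXiv:1508.04514 — 4 statements merged into one kernel-verified Lean document; each statement's English description precedes it below -/
import Mathlib

section
/- Let S be a real m×n matrix, G a real k×n matrix, and r a natural number. Let G⁺ denote the Moore–Penrose inverse of G, and let B be any best rank-r approximation of the matrix S·G⁺·G (in the Frobenius norm). Then the matrix F₀ = B·G⁺ has rank at most r and is a minimizer of the rank-constrained least squares problem: for every real m×k matrix F with rank F ≤ r one has ‖S − F₀·G‖_F ≤ ‖S − F·G‖_F. -/
/-! `P = G⁺ G` is a self-adjoint idempotent, so right multiplication by `P` splits the squared
Frobenius norm orthogonally: `‖X‖² = ‖X P‖² + ‖X - X P‖²`. Both `F G` and `B G⁺ G` are fixed by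
`P`, hence `‖S - Y‖² = ‖S P - Y‖² + ‖S - S P‖²` for either of them, and the second summand does
not depend on `Y`. It remains to chain `‖S P - B P‖ ≤ ‖S P - B‖` (projection is a contraction)
with `‖S P - B‖ ≤ ‖S P - F G‖` (optimality of `B`, since `rank (F G) ≤ r`). -/

open Matrix

/-- Frobenius norm of a real matrix: square root of the sum of squares of entries. -/
noncomputable def frobNorm {m n : Type*} [Fintype m] [Fintype n] (A : Matrix m n ℝ) : ℝ :=
  Real.sqrt (∑ i, ∑ j, (A i j) ^ 2)

/-- The four Penrose equations characterizing the Moore–Penrose inverse. -/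
def IsMoorePenrose {m n : Type*} [Fintype m] [Fintype n]
    (G : Matrix m n ℝ) (B : Matrix n m ℝ) : Prop :=
  G * B * G = G ∧ B * G * B = B ∧ (G * B)ᵀ = G * B ∧ (B * G)ᵀ = B * G

theorem mul_conjTranspose_eq_add_of_isStarProjection {m n R : Type*} [Fintype n] [Ring R]
    [StarRing R] {P : Matrix n n R} (hP : IsStarProjection P) (X : Matrix m n R) :
    X * Xᴴ = (X * P) * (X * P)ᴴ + (X - X * P) * (X - X * P)ᴴ := by
  have hPP : P * P = P := hP.isIdempotentElem
  have hPh : Pᴴ = P := hP.isSelfAdjoint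
  simp only [conjTranspose_mul, conjTranspose_sub, hPh, Matrix.mul_sub, Matrix.sub_mul,
    Matrix.mul_assoc]
  rw [← Matrix.mul_assoc P P, hPP]
  abel

theorem IsMoorePenrose.isStarProjection_mul {m n : Type*} [Fintype m] [Fintype n]
    {G : Matrix m n ℝ} {Gp : Matrix n m ℝ} (hGp : IsMoorePenrose G Gp) :
    IsStarProjection (Gp * G) where
  isIdempotentElem := by
    rw [IsIdempotentElem, ← Matrix.mul_assoc, hGp.2.1]
  isSelfAdjoint := by
    rw [IsSelfAdjoint, star_eq_conjTranspose, conjTranspose_eq_transpose_of_trivial, hGp.2.2.2]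

section Frobenius

variable {m n : Type*} [Fintype m] [Fintype n]

theorem frobNorm_nonneg (A : Matrix m n ℝ) : 0 ≤ frobNorm A :=
  Real.sqrt_nonneg _

theorem frobNorm_sq_eq_trace (A : Matrix m n ℝ) : frobNorm A ^ 2 = trace (A * Aᴴ) := by
  rw [frobNorm, Real.sq_sqrt (by positivity)]
  simp only [trace, diag, mul_apply, conjTranspose_apply, star_trivial, sq]

variable {P : Matrix n n ℝ}

theorem frobNorm_sq_eq_add_of_isStarProjection (hP : IsStarProjection P) (X : Matrix m n ℝ) :
    frobNorm X ^ 2 = frobNorm (X * P) ^ 2 + frobNorm (X - X * P) ^ 2 := by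
  simp only [frobNorm_sq_eq_trace, ← trace_add, ← mul_conjTranspose_eq_add_of_isStarProjection hP]

theorem frobNorm_mul_le_of_isStarProjection (hP : IsStarProjection P) (X : Matrix m n ℝ) :
    frobNorm (X * P) ≤ frobNorm X := by
  rw [← pow_le_pow_iff_left₀ (frobNorm_nonneg _) (frobNorm_nonneg _) two_ne_zero,
    frobNorm_sq_eq_add_of_isStarProjection hP X]
  exact le_add_of_nonneg_right (sq_nonneg _)

theorem frobNorm_sub_sq_eq_add_of_mul_eq (hP : IsStarProjection P) {X Y : Matrix m n ℝ}
    (hY : Y * P = Y) :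
    frobNorm (X - Y) ^ 2 = frobNorm (X * P - Y) ^ 2 + frobNorm (X - X * P) ^ 2 := by
  rw [frobNorm_sq_eq_add_of_isStarProjection hP, Matrix.sub_mul, hY]
  congr 3
  abel

end Frobenius

theorem rank_constrained_least_squares_minimizer
    {m n k : ℕ} (S : Matrix (Fin m) (Fin n) ℝ) (G : Matrix (Fin k) (Fin n) ℝ)
    (r : ℕ) (Gp : Matrix (Fin n) (Fin k) ℝ) (hGp : IsMoorePenrose G Gp)
    (B : Matrix (Fin m) (Fin n) ℝ)
    (hBrank : B.rank ≤ r)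
    (hBbest : ∀ B' : Matrix (Fin m) (Fin n) ℝ, B'.rank ≤ r →
      frobNorm (S * Gp * G - B) ≤ frobNorm (S * Gp * G - B')) :
    (B * Gp).rank ≤ r ∧
      ∀ F : Matrix (Fin m) (Fin k) ℝ, F.rank ≤ r →
        frobNorm (S - (B * Gp) * G) ≤ frobNorm (S - F * G) := by
  refine ⟨(rank_mul_le_left B Gp).trans hBrank, fun F hF => ?_⟩
  set P := Gp * G
  have hP : IsStarProjection P := hGp.isStarProjection_mul
  have hPP : P * P = P := hP.isIdempotentElem
  have hB_opt : frobNorm (S * P - B) ≤ frobNorm (S * P - F * G) :=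
    Matrix.mul_assoc S Gp G ▸ hBbest _ ((rank_mul_le_left F G).trans hF)
  have hBP_le : frobNorm (S * P - B * P) ≤ frobNorm (S * P - F * G) := calc
    frobNorm (S * P - B * P) = frobNorm ((S * P - B) * P) := by
      rw [Matrix.sub_mul, Matrix.mul_assoc, hPP]
    _ ≤ frobNorm (S * P - B) := frobNorm_mul_le_of_isStarProjection hP _
    _ ≤ frobNorm (S * P - F * G) := hB_opt
  have hBPP : B * P * P = B * P := by rw [Matrix.mul_assoc, hPP]
  have hFGP : F * G * P = F * G := by rw [Matrix.mul_assoc, ← Matrix.mul_assoc G, hGp.1]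
  rw [Matrix.mul_assoc B, ← pow_le_pow_iff_left₀ (frobNorm_nonneg _) (frobNorm_nonneg _)
    two_ne_zero, frobNorm_sub_sq_eq_add_of_mul_eq hP hBPP, frobNorm_sub_sq_eq_add_of_mul_eq hP hFGP]
  exact add_le_add_left (pow_le_pow_left₀ (frobNorm_nonneg _) hBP_le 2) _
end

section
/- Let (F^{(q)})_{q≥0} be an MBI sequence for the objective f(F₁,…,F_p) = ‖H − Σ_{j=1}^p F_j·G_j‖_F². If the sequence of tuples F^{(q)} converges (entrywise) to a tuple F̌ = (F̌₁,…,F̌_p), then F̌ is a coordinate-wise minimum point of f on the rank-constrained domain: for every index j, rank F̌_j ≤ r_j and for every real m×n_j matrix X with rank X ≤ r_j one has f(F̌₁,…,F̌_p) ≤ f(F̌₁,…,F̌_{j−1}, X, F̌_{j+1},…,F̌_p). -/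
open Matrix

/-- The objective `f(F₁,…,F_p) = ‖H − Σ_j F_j G_j‖_F²`. -/
noncomputable def mbiObj {p m N : ℕ} (n : Fin p → ℕ)
    (H : Matrix (Fin m) (Fin N) ℝ)
    (G : ∀ j : Fin p, Matrix (Fin (n j)) (Fin N) ℝ)
    (F : ∀ j : Fin p, Matrix (Fin m) (Fin (n j)) ℝ) : ℝ :=
  (frobNorm (H - ∑ j, F j * G j)) ^ 2

/-- An MBI (maximum block improvement) sequence for the objective `mbiObj`:
every iterate satisfies the rank constraints, and each new iterate improves on
every single-block update of the previous iterate. -/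
def IsMBISequence {p m N : ℕ} (n r : Fin p → ℕ)
    (H : Matrix (Fin m) (Fin N) ℝ)
    (G : ∀ j : Fin p, Matrix (Fin (n j)) (Fin N) ℝ)
    (Fseq : ℕ → ∀ j : Fin p, Matrix (Fin m) (Fin (n j)) ℝ) : Prop :=
  (∀ q (j : Fin p), (Fseq q j).rank ≤ r j) ∧
    (∀ q (j : Fin p) (X : Matrix (Fin m) (Fin (n j)) ℝ), X.rank ≤ r j →
      mbiObj n H G (Fseq (q + 1)) ≤ mbiObj n H G (Function.update (Fseq q) j X))

/-! Along the sequence, `f (x (q+1)) ≤ f (update (x q) i y)` for every admissible block `y`.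
Both sides are continuous functions of the iterates, so the inequality passes to the limit,
and the limit stays admissible because the constraint sets are closed. For the rank
constraints, closedness is lower semicontinuity of the rank: linear independence of a
finite family is an open condition. -/

open Filter Topology Function

def IsCoordinatewiseMinOn {ι : Type*} [DecidableEq ι] {X : ι → Type*}
    (f : (∀ i, X i) → ℝ) (S : ∀ i, Set (X i)) (x : ∀ i, X i) : Prop :=
  ∀ i, x i ∈ S i ∧ ∀ y ∈ S i, f x ≤ f (update x i y)

theorem isCoordinatewiseMinOn_of_tendsto_of_blockImprovement {ι : Type*} [DecidableEq ι]
    {X : ι → Type*} [∀ i, TopologicalSpace (X i)] {f : (∀ i, X i) → ℝ} (hf : Continuous f)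
    {S : ∀ i, Set (X i)} (hS : ∀ i, IsClosed (S i)) {x : ℕ → ∀ i, X i} {xlim : ∀ i, X i}
    (hx : Tendsto x atTop (𝓝 xlim)) (hxS : ∀ q i, x q i ∈ S i)
    (himprove : ∀ q i, ∀ y ∈ S i, f (x (q + 1)) ≤ f (update (x q) i y)) :
    IsCoordinatewiseMinOn f S xlim := by
  intro i
  refine ⟨(hS i).mem_of_tendsto ((continuous_apply i).tendsto xlim |>.comp hx)
    (Eventually.of_forall fun q => hxS q i), fun y hy => ?_⟩
  have hnext : Tendsto (fun q => f (x (q + 1))) atTop (𝓝 (f xlim)) :=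
    (hf.tendsto xlim).comp (hx.comp (tendsto_add_atTop_nat 1))
  have hupdate : Tendsto (fun q => f (update (x q) i y)) atTop (𝓝 (f (update xlim i y))) :=
    ((hf.comp (continuous_id.update i continuous_const)).tendsto xlim).comp hx
  exact le_of_tendsto_of_tendsto' hnext hupdate fun q => himprove q i y hy

theorem Matrix.isClosed_setOf_rank_le {𝕜 : Type*} [NontriviallyNormedField 𝕜] [CompleteSpace 𝕜]
    {m n : Type*} [Fintype m] [Fintype n] (r : ℕ) :
    IsClosed {A : Matrix m n 𝕜 | A.rank ≤ r} := by
  classical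
  let toCLM : Matrix m n 𝕜 →ₗ[𝕜] (n → 𝕜) →L[𝕜] (m → 𝕜) :=
    LinearMap.toContinuousLinearMap.toLinearMap ∘ₗ Matrix.toLin'.toLinearMap
  have rank_toCLM (A : Matrix m n 𝕜) :
      (toCLM A : (n → 𝕜) →ₗ[𝕜] (m → 𝕜)).rank = A.rank := by
    rw [Matrix.rank, Module.finrank_eq_rank]
    rfl
  have hopen := (isOpen_setOfPred_nat_le_rank (r + 1)).preimage
    (LinearMap.continuous_of_finiteDimensional toCLM)
  refine isOpen_compl_iff.1 ?_
  convert hopen using 1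
  ext A
  simp [rank_toCLM]

theorem continuous_frobNorm {m n : Type*} [Fintype m] [Fintype n] :
    Continuous (frobNorm : Matrix m n ℝ → ℝ) :=
  Real.continuous_sqrt.comp <| continuous_finsetSum _ fun i _ =>
    continuous_finsetSum _ fun j _ => (continuous_id.matrix_elem i j).pow 2

theorem continuous_mbiObj {p m N : ℕ} (n : Fin p → ℕ) (H : Matrix (Fin m) (Fin N) ℝ)
    (G : ∀ j : Fin p, Matrix (Fin (n j)) (Fin N) ℝ) :
    Continuous (mbiObj n H G) :=
  (continuous_frobNorm.comp <| continuous_const.sub <| continuous_finsetSum _ fun j _ =>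
    (continuous_apply j).matrix_mul continuous_const).pow 2

theorem mbi_limit_is_coordinatewise_minimum_general
    {p m N : ℕ} (n r : Fin p → ℕ)
    (H : Matrix (Fin m) (Fin N) ℝ)
    (G : ∀ j : Fin p, Matrix (Fin (n j)) (Fin N) ℝ)
    (Fseq : ℕ → ∀ j : Fin p, Matrix (Fin m) (Fin (n j)) ℝ)
    (hMBI : IsMBISequence n r H G Fseq)
    (Flim : ∀ j : Fin p, Matrix (Fin m) (Fin (n j)) ℝ)
    (hconv : ∀ (j : Fin p) (i : Fin m) (k : Fin (n j)),
      Filter.Tendsto (fun q => Fseq q j i k) Filter.atTop (nhds (Flim j i k))) :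
    ∀ j : Fin p, (Flim j).rank ≤ r j ∧
      ∀ X : Matrix (Fin m) (Fin (n j)) ℝ, X.rank ≤ r j →
        mbiObj n H G Flim ≤ mbiObj n H G (Function.update Flim j X) := by
  have hFseq : Tendsto Fseq atTop (𝓝 Flim) :=
    tendsto_pi_nhds.2 fun j => tendsto_pi_nhds.2 fun i => tendsto_pi_nhds.2 (hconv j i)
  exact isCoordinatewiseMinOn_of_tendsto_of_blockImprovement (continuous_mbiObj n H G)
    (fun j => Matrix.isClosed_setOf_rank_le (r j)) hFseq hMBI.1 hMBI.2

theorem mbi_limit_is_coordinatewise_minimum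
    {p m N : ℕ} (hp : 1 ≤ p) (n r : Fin p → ℕ)
    (H : Matrix (Fin m) (Fin N) ℝ)
    (G : ∀ j : Fin p, Matrix (Fin (n j)) (Fin N) ℝ)
    (Fseq : ℕ → ∀ j : Fin p, Matrix (Fin m) (Fin (n j)) ℝ)
    (hMBI : IsMBISequence n r H G Fseq)
    (Flim : ∀ j : Fin p, Matrix (Fin m) (Fin (n j)) ℝ)
    (hconv : ∀ (j : Fin p) (i : Fin m) (k : Fin (n j)),
      Filter.Tendsto (fun q => Fseq q j i k) Filter.atTop (nhds (Flim j i k))) :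
    ∀ j : Fin p, (Flim j).rank ≤ r j ∧
      ∀ X : Matrix (Fin m) (Fin (n j)) ℝ, X.rank ≤ r j →
        mbiObj n H G Flim ≤ mbiObj n H G (Function.update Flim j X) :=
  mbi_limit_is_coordinatewise_minimum_general n r H G Fseq hMBI Flim hconv
end

section
/- For every real m×n matrix C and every natural number r, a best rank-r approximation of C in the Frobenius norm exists: there is a real m×n matrix B with rank B ≤ r such that ‖C − B‖_F ≤ ‖C − B′‖_F for every real m×n matrix B′ with rank B′ ≤ r. -/
theorem Matrix.isClosed_setOfPred_rank_le {𝕜 : Type*} [NontriviallyNormedField 𝕜] [CompleteSpace 𝕜]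
    (m n : Type*) [Fintype m] [Fintype n] (r : ℕ) :
    IsClosed {A : Matrix m n 𝕜 | A.rank ≤ r} := by
  classical
  let toCLM : Matrix m n 𝕜 →ₗ[𝕜] (n → 𝕜) →L[𝕜] (m → 𝕜) :=
    LinearMap.toContinuousLinearMap.toLinearMap ∘ₗ Matrix.toLin'.toLinearMap
  have hrank (A : Matrix m n 𝕜) : (toCLM A : (n → 𝕜) →ₗ[𝕜] (m → 𝕜)).rank = A.rank := by
    rw [LinearMap.rank, ← Module.finrank_eq_rank]
    rfl
  have hset : {A : Matrix m n 𝕜 | A.rank ≤ r} =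
      toCLM ⁻¹' {f | ↑(r + 1) ≤ (f : (n → 𝕜) →ₗ[𝕜] (m → 𝕜)).rank}ᶜ := by
    ext A
    simp only [Set.mem_preimage, Set.mem_compl_iff, Set.mem_ofPred_eq, not_le, hrank,
      Nat.cast_lt, Nat.lt_succ_iff]
  rw [hset]
  exact (isOpen_setOfPred_nat_le_rank (r + 1)).isClosed_compl.preimage
    toCLM.continuous_of_finiteDimensional

attribute [local instance] Matrix.frobeniusNormedAddCommGroup Matrix.frobeniusNormedSpace

theorem frobNorm_eq_norm {m n : Type*} [Fintype m] [Fintype n] (A : Matrix m n ℝ) :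
    frobNorm A = ‖A‖ := by
  simp [frobNorm, Matrix.frobenius_norm_def, Real.sqrt_eq_rpow]

theorem exists_best_rank_r_approximation
    {m n : ℕ} (C : Matrix (Fin m) (Fin n) ℝ) (r : ℕ) :
    ∃ B : Matrix (Fin m) (Fin n) ℝ, B.rank ≤ r ∧
      ∀ B' : Matrix (Fin m) (Fin n) ℝ, B'.rank ≤ r →
        frobNorm (C - B) ≤ frobNorm (C - B') := by
  obtain ⟨B, hB, hdist⟩ :=
    (Matrix.isClosed_setOfPred_rank_le _ _ r).exists_infDist_eq_dist ⟨0, by simp⟩ C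
  refine ⟨B, hB, fun B' hB' => ?_⟩
  simp only [frobNorm_eq_norm, ← dist_eq_norm]
  exact hdist ▸ Metric.infDist_le_dist_of_mem hB'
end

section
/- Let (Ω, Σ, μ) be a probability space, let x : Ω → ℝ^m be a random vector, and for j = 1,…,p let y_j : Ω → ℝ^{n_j} be random vectors, all components lying in L²(μ); let y : Ω → ℝ^n (with n = n₁+…+n_p) be the concatenation of y₁,…,y_p. Let S be the positive semidefinite square root of E_yy, B the Moore–Penrose inverse of S, H = E_xy·B, and write S in row blocks S = [G₁ᵀ, …, G_pᵀ]ᵀ with G_j ∈ ℝ^{n_j×n} conforming to the partition of y. Then for every tuple of real matrices F_j ∈ ℝ^{m×n_j} (j = 1,…,p), ∫_Ω ‖x(ω) − Σ_{j=1}^p F_j·y_j(ω)‖₂² dμ(ω) = tr(E_xx) − ‖H‖_F² + ‖H − Σ_{j=1}^p F_j·G_j‖_F². Consequently, for any rank bounds r₁,…,r_p, the infimum of the left-hand side over all tuples with rank F_j ≤ r_j equals tr(E_xx) − ‖H‖_F² plus the infimum of ‖H − Σ_j F_j·G_j‖_F² over the same tuples. -/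
/-!
Expanding the square, the mean squared error of a linear predictor `C y` is
`tr E_xx - 2 tr (C E_xyᵀ) + tr (C E_yy Cᵀ)`. Writing `E_yy = S S` with `S` symmetric, this equals
`tr E_xx - ‖H‖² + ‖H - C S‖²` as soon as `H S = E_xy`, i.e. `E_xy (1 - B S) = 0`. That holds because
`S (1 - B S) = 0`: the random vector `(1 - B S)ᵀ y` then has zero second moment, so it vanishes
almost surely and is uncorrelated with `x`. The distributed predictor `∑ F_j y_j` is `C y` for the
block row `C = [F₁ ⋯ F_p]`, and `C S = ∑ F_j G_j`. The two objectives of the infima then differ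
by a constant.
-/

open MeasureTheory Matrix

namespace Matrix

variable {R α β ι : Type*} [CommSemiring R] [Fintype ι] {κ : ι → Type*} [∀ j, Fintype (κ j)]

def fromSigmaCols (F : ∀ j, Matrix α (κ j) R) : Matrix α (Σ j, κ j) R :=
  of fun i jk => F jk.1 i jk.2

def fromSigmaRows (G : ∀ j, Matrix (κ j) β R) : Matrix (Σ j, κ j) β R :=
  of fun jk l => G jk.1 jk.2 l

theorem fromSigmaCols_mul_fromSigmaRows (F : ∀ j, Matrix α (κ j) R) (G : ∀ j, Matrix (κ j) β R) :
    fromSigmaCols F * fromSigmaRows G = ∑ j, F j * G j := by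
  ext i l
  simp only [mul_apply, sum_apply, Fintype.sum_sigma, fromSigmaCols, fromSigmaRows, of_apply]

theorem fromSigmaCols_mulVec (F : ∀ j, Matrix α (κ j) R) (v : (Σ j, κ j) → R) :
    fromSigmaCols F *ᵥ v = ∑ j, F j *ᵥ fun k => v ⟨j, k⟩ := by
  ext i
  simp only [mulVec, dotProduct, Finset.sum_apply, Fintype.sum_sigma, fromSigmaCols, of_apply]

end Matrix

theorem sq_frobNorm {m n : Type*} [Fintype m] [Fintype n] (A : Matrix m n ℝ) :
    frobNorm A ^ 2 = (A * Aᵀ).trace := by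
  rw [frobNorm, Real.sq_sqrt (by positivity)]
  simp only [trace, diag, mul_apply, transpose_apply, sq]

theorem sq_frobNorm_sub {m n : Type*} [Fintype m] [Fintype n] (A B : Matrix m n ℝ) :
    frobNorm (A - B) ^ 2 = frobNorm A ^ 2 - 2 * (B * Aᵀ).trace + frobNorm B ^ 2 := by
  simp only [sq_frobNorm, transpose_sub, Matrix.sub_mul, Matrix.mul_sub, trace_sub]
  rw [← trace_transpose (A * Bᵀ), transpose_mul, transpose_transpose]
  ring

theorem sq_frobNorm_sub_mul {m n k : Type*} [Fintype m] [Fintype n] [Fintype k]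
    (H : Matrix m n ℝ) (C : Matrix m k ℝ) {S : Matrix k n ℝ} :
    frobNorm (H - C * S) ^ 2 =
      frobNorm H ^ 2 - 2 * (C * (H * Sᵀ)ᵀ).trace + (C * (S * Sᵀ) * Cᵀ).trace := by
  rw [sq_frobNorm_sub, sq_frobNorm (C * S)]
  simp only [transpose_mul, transpose_transpose, Matrix.mul_assoc]

theorem csInf_image_const_add {α : Type*} [ConditionallyCompleteLattice α] [AddGroup α]
    [AddLeftMono α] (c : α) {s : Set α} (hne : s.Nonempty) (hbdd : BddBelow s) :
    sInf ((c + ·) '' s) = c + sInf s :=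
  ((OrderIso.addLeft c).map_csInf' hne hbdd).symm

section SecondMoment

variable {Ω ι κ ν : Type*} [MeasurableSpace Ω] {μ : Measure Ω}

noncomputable def secondMoment (μ : Measure Ω) (x : Ω → ι → ℝ) (y : Ω → κ → ℝ) : Matrix ι κ ℝ :=
  of fun i j => ∫ ω, x ω i * y ω j ∂μ

theorem transpose_secondMoment (x : Ω → ι → ℝ) (y : Ω → κ → ℝ) :
    (secondMoment μ x y)ᵀ = secondMoment μ y x := by
  ext i j
  simp only [secondMoment, transpose_apply, of_apply, mul_comm]

theorem memLp_mulVec_apply [Fintype ι] {x : Ω → ι → ℝ} (hx : ∀ i, MemLp (x · i) 2 μ)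
    (C : Matrix κ ι ℝ) (k : κ) : MemLp (fun ω => (C *ᵥ x ω) k) 2 μ :=
  memLp_finsetSum _ fun i _ => (hx i).const_mul (C k i)

theorem secondMoment_mulVec_left [Fintype ι] {x : Ω → ι → ℝ} {y : Ω → ν → ℝ}
    (hx : ∀ i, MemLp (x · i) 2 μ) (hy : ∀ l, MemLp (y · l) 2 μ) (C : Matrix κ ι ℝ) :
    secondMoment μ (fun ω => C *ᵥ x ω) y = C * secondMoment μ x y := by
  have hxy : ∀ i l, Integrable (fun ω => x ω i * y ω l) μ := fun i l =>
    (hx i).integrable_mul (hy l)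
  ext k l
  simp only [secondMoment, of_apply, mul_apply, mulVec, dotProduct, Finset.sum_mul, mul_assoc]
  rw [integral_finsetSum _ fun i _ => (hxy i l).const_mul _]
  simp only [integral_const_mul]

theorem secondMoment_mulVec_right [Fintype κ] {x : Ω → ι → ℝ} {y : Ω → κ → ℝ}
    (hx : ∀ i, MemLp (x · i) 2 μ) (hy : ∀ k, MemLp (y · k) 2 μ) (D : Matrix ν κ ℝ) :
    secondMoment μ x (fun ω => D *ᵥ y ω) = secondMoment μ x y * Dᵀ := by
  rw [← transpose_secondMoment, secondMoment_mulVec_left hy hx, transpose_mul,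
    transpose_secondMoment]

theorem secondMoment_sub_left {x z : Ω → ι → ℝ} {y : Ω → κ → ℝ}
    (hx : ∀ i, MemLp (x · i) 2 μ) (hz : ∀ i, MemLp (z · i) 2 μ) (hy : ∀ k, MemLp (y · k) 2 μ) :
    secondMoment μ (fun ω i => x ω i - z ω i) y = secondMoment μ x y - secondMoment μ z y := by
  ext i k
  simp only [secondMoment, of_apply, Matrix.sub_apply, sub_mul]
  exact integral_sub ((hx i).integrable_mul (hy k)) ((hz i).integrable_mul (hy k))

theorem secondMoment_sub_right {x : Ω → ι → ℝ} {y z : Ω → κ → ℝ}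
    (hx : ∀ i, MemLp (x · i) 2 μ) (hy : ∀ k, MemLp (y · k) 2 μ) (hz : ∀ k, MemLp (z · k) 2 μ) :
    secondMoment μ x (fun ω k => y ω k - z ω k) = secondMoment μ x y - secondMoment μ x z := by
  rw [← transpose_secondMoment, secondMoment_sub_left hy hz hx, transpose_sub,
    transpose_secondMoment, transpose_secondMoment]

theorem integral_sum_sq_eq_trace_secondMoment [Fintype ι] {x : Ω → ι → ℝ}
    (hx : ∀ i, MemLp (x · i) 2 μ) :
    ∫ ω, ∑ i, x ω i ^ 2 ∂μ = (secondMoment μ x x).trace := by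
  rw [integral_finsetSum _ fun i _ => (hx i).integrable_sq]
  simp only [trace, diag, secondMoment, of_apply, sq]

theorem secondMoment_eq_zero_of_trace_eq_zero [Fintype κ] (x : Ω → ι → ℝ) {z : Ω → κ → ℝ}
    (hz : ∀ k, MemLp (z · k) 2 μ) (h : (secondMoment μ z z).trace = 0) :
    secondMoment μ x z = 0 := by
  rw [← integral_sum_sq_eq_trace_secondMoment hz] at h
  have hz0 : ∀ᵐ ω ∂μ, ∑ k, z ω k ^ 2 = 0 :=
    (integral_eq_zero_iff_of_nonneg (fun ω => by positivity)
      (integrable_finsetSum _ fun k _ => (hz k).integrable_sq)).mp h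
  ext i k
  refine integral_eq_zero_of_ae (hz0.mono fun ω hω => ?_)
  have hk : z ω k ^ 2 = 0 :=
    (Finset.sum_eq_zero_iff_of_nonneg fun k _ => sq_nonneg (z ω k)).mp hω k (Finset.mem_univ k)
  simp [pow_eq_zero_iff two_ne_zero |>.mp hk]

theorem secondMoment_mul_eq_zero [Fintype κ] [Fintype ν] {x : Ω → ι → ℝ} {y : Ω → κ → ℝ}
    (hx : ∀ i, MemLp (x · i) 2 μ) (hy : ∀ k, MemLp (y · k) 2 μ) {P : Matrix κ ν ℝ}
    (hP : Pᵀ * secondMoment μ y y * P = 0) :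
    secondMoment μ x y * P = 0 := by
  have hz := memLp_mulVec_apply hy Pᵀ
  have hzz : secondMoment μ (fun ω => Pᵀ *ᵥ y ω) (fun ω => Pᵀ *ᵥ y ω) = 0 := by
    rw [secondMoment_mulVec_left hy hz, secondMoment_mulVec_right hy hy, transpose_transpose,
      ← Matrix.mul_assoc, hP]
  have hxz := secondMoment_eq_zero_of_trace_eq_zero x hz (by rw [hzz, trace_zero])
  rwa [secondMoment_mulVec_right hx hy, transpose_transpose] at hxz

theorem integral_sum_sq_sub_mulVec [Fintype ι] [Fintype κ] {x : Ω → ι → ℝ} {y : Ω → κ → ℝ}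
    (hx : ∀ i, MemLp (x · i) 2 μ) (hy : ∀ k, MemLp (y · k) 2 μ) (C : Matrix ι κ ℝ) :
    ∫ ω, ∑ i, (x ω i - (C *ᵥ y ω) i) ^ 2 ∂μ =
      (secondMoment μ x x).trace - 2 * (C * (secondMoment μ x y)ᵀ).trace +
        (C * secondMoment μ y y * Cᵀ).trace := by
  have hCy := memLp_mulVec_apply hy C
  have hxCy : ∀ i, MemLp (fun ω => x ω i - (C *ᵥ y ω) i) 2 μ := fun i => (hx i).sub (hCy i)
  rw [integral_sum_sq_eq_trace_secondMoment hxCy]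
  rw [secondMoment_sub_left hx hCy hxCy, secondMoment_sub_right hx hx hCy,
    secondMoment_sub_right hCy hx hCy, secondMoment_mulVec_left hy hx,
    secondMoment_mulVec_left hy hCy, secondMoment_mulVec_right hx hy,
    secondMoment_mulVec_right hy hy, ← transpose_secondMoment x y]
  simp only [trace_sub, Matrix.mul_assoc]
  rw [← trace_transpose (secondMoment μ x y * Cᵀ), transpose_mul, transpose_transpose]
  ring

theorem integral_sum_sq_sub_mulVec_eq_frobNorm [Fintype ι] [Fintype κ]
    {x : Ω → ι → ℝ} {y : Ω → κ → ℝ}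
    (hx : ∀ i, MemLp (x · i) 2 μ) (hy : ∀ k, MemLp (y · k) 2 μ) {S B : Matrix κ κ ℝ}
    (hS : S.IsSymm) (hSS : S * S = secondMoment μ y y) (hB : S * B * S = S) (C : Matrix ι κ ℝ) :
    ∫ ω, ∑ i, (x ω i - (C *ᵥ y ω) i) ^ 2 ∂μ =
      (secondMoment μ x x).trace - frobNorm (secondMoment μ x y * B) ^ 2 +
        frobNorm (secondMoment μ x y * B - C * S) ^ 2 := by
  classical
  have hHS : secondMoment μ x y * B * S = secondMoment μ x y := by
    have hSP : S * (1 - B * S) = 0 := by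
      rw [Matrix.mul_sub, Matrix.mul_one, ← Matrix.mul_assoc, hB, sub_self]
    have h := secondMoment_mul_eq_zero hx hy (P := 1 - B * S) (by
      rw [← hSS, Matrix.mul_assoc, Matrix.mul_assoc, hSP, Matrix.mul_zero, Matrix.mul_zero])
    rwa [Matrix.mul_sub, Matrix.mul_one, sub_eq_zero, eq_comm, ← Matrix.mul_assoc] at h
  rw [integral_sum_sq_sub_mulVec hx hy, sq_frobNorm_sub_mul, hS.eq, hHS, hSS]
  ring

end SecondMoment

theorem distributed_mse_frobenius_reduction_general
    {Ω : Type*} [MeasurableSpace Ω] (μ : Measure Ω)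
    {m p : ℕ} (n : Fin p → ℕ)
    (x : Ω → Fin m → ℝ) (yblk : ∀ j : Fin p, Ω → Fin (n j) → ℝ)
    -- `y` is the concatenation of `y₁,…,y_p`, indexed by the sigma type `(j : Fin p) × Fin (n j)`
    (y : Ω → ((j : Fin p) × Fin (n j)) → ℝ)
    (hy_concat : ∀ ω (j : Fin p) (k : Fin (n j)), y ω ⟨j, k⟩ = yblk j ω k)
    (hx : ∀ i, MemLp (fun ω => x ω i) 2 μ)
    (hy : ∀ jk : (j : Fin p) × Fin (n j), MemLp (fun ω => y ω jk) 2 μ)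
    (Exx : Matrix (Fin m) (Fin m) ℝ) (hExx : ∀ i j, Exx i j = ∫ ω, x ω i * x ω j ∂μ)
    (Exy : Matrix (Fin m) ((j : Fin p) × Fin (n j)) ℝ)
    (hExy : ∀ i jk, Exy i jk = ∫ ω, x ω i * y ω jk ∂μ)
    (Eyy : Matrix ((j : Fin p) × Fin (n j)) ((j : Fin p) × Fin (n j)) ℝ)
    (hEyy : ∀ jk jk', Eyy jk jk' = ∫ ω, y ω jk * y ω jk' ∂μ)
    (S : Matrix ((j : Fin p) × Fin (n j)) ((j : Fin p) × Fin (n j)) ℝ)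
    (hS : S.PosSemidef) (hSS : S * S = Eyy)
    (B : Matrix ((j : Fin p) × Fin (n j)) ((j : Fin p) × Fin (n j)) ℝ)
    (hB : IsMoorePenrose S B)
    (H : Matrix (Fin m) ((j : Fin p) × Fin (n j)) ℝ) (hH : H = Exy * B)
    -- the row blocks `G_j` of `S`, conforming to the partition of `y`
    (G : ∀ j : Fin p, Matrix (Fin (n j)) ((j : Fin p) × Fin (n j)) ℝ)
    (hG : ∀ (j : Fin p) (k : Fin (n j)) l, G j k l = S ⟨j, k⟩ l)
    (r : Fin p → ℕ) :
    (∀ F : ∀ j : Fin p, Matrix (Fin m) (Fin (n j)) ℝ,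
      ∫ ω, ∑ i, (x ω i - ∑ j, (F j).mulVec (yblk j ω) i) ^ 2 ∂μ =
        Exx.trace - frobNorm H ^ 2 + frobNorm (H - ∑ j, F j * G j) ^ 2) ∧
    sInf {e : ℝ | ∃ F : ∀ j : Fin p, Matrix (Fin m) (Fin (n j)) ℝ,
        (∀ j, (F j).rank ≤ r j) ∧
        e = ∫ ω, ∑ i, (x ω i - ∑ j, (F j).mulVec (yblk j ω) i) ^ 2 ∂μ} =
      Exx.trace - frobNorm H ^ 2 +
        sInf {e : ℝ | ∃ F : ∀ j : Fin p, Matrix (Fin m) (Fin (n j)) ℝ,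
          (∀ j, (F j).rank ≤ r j) ∧ e = frobNorm (H - ∑ j, F j * G j) ^ 2} := by
  obtain rfl : Exx = secondMoment μ x x := Matrix.ext hExx
  obtain rfl : Exy = secondMoment μ x y := Matrix.ext hExy
  obtain rfl : Eyy = secondMoment μ y y := Matrix.ext hEyy
  obtain rfl : S = fromSigmaRows G := Matrix.ext fun jk l => (hG jk.1 jk.2 l).symm
  subst hH
  have hmse (F : ∀ j : Fin p, Matrix (Fin m) (Fin (n j)) ℝ) :
      ∫ ω, ∑ i, (x ω i - ∑ j, (F j).mulVec (yblk j ω) i) ^ 2 ∂μ =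
        (secondMoment μ x x).trace - frobNorm (secondMoment μ x y * B) ^ 2 +
          frobNorm (secondMoment μ x y * B - ∑ j, F j * G j) ^ 2 := by
    simpa only [fromSigmaCols_mulVec, fromSigmaCols_mul_fromSigmaRows, Finset.sum_apply,
      hy_concat] using
      integral_sum_sq_sub_mulVec_eq_frobNorm hx hy (isHermitian_iff_isSymm.mp hS.isHermitian)
        hSS hB.1 (fromSigmaCols F)
  refine ⟨hmse, ?_⟩
  simp_rw [hmse]
  rw [← csInf_image_const_add]
  · congr 1
    ext e
    constructor
    · rintro ⟨F, hF, rfl⟩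
      exact ⟨_, ⟨F, hF, rfl⟩, rfl⟩
    · rintro ⟨_, ⟨F, hF, rfl⟩, rfl⟩
      exact ⟨F, hF, rfl⟩
  · exact ⟨_, fun j => 0, fun j => by simp, rfl⟩
  · exact ⟨0, by rintro _ ⟨F, -, rfl⟩; positivity⟩

theorem distributed_mse_frobenius_reduction
    {Ω : Type*} [MeasurableSpace Ω] (μ : Measure Ω) [IsProbabilityMeasure μ]
    {m p : ℕ} (n : Fin p → ℕ)
    (x : Ω → Fin m → ℝ) (yblk : ∀ j : Fin p, Ω → Fin (n j) → ℝ)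
    -- `y` is the concatenation of `y₁,…,y_p`, indexed by the sigma type `(j : Fin p) × Fin (n j)`
    (y : Ω → ((j : Fin p) × Fin (n j)) → ℝ)
    (hy_concat : ∀ ω (j : Fin p) (k : Fin (n j)), y ω ⟨j, k⟩ = yblk j ω k)
    (hx : ∀ i, MemLp (fun ω => x ω i) 2 μ)
    (hy : ∀ jk : (j : Fin p) × Fin (n j), MemLp (fun ω => y ω jk) 2 μ)
    (Exx : Matrix (Fin m) (Fin m) ℝ) (hExx : ∀ i j, Exx i j = ∫ ω, x ω i * x ω j ∂μ)
    (Exy : Matrix (Fin m) ((j : Fin p) × Fin (n j)) ℝ)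
    (hExy : ∀ i jk, Exy i jk = ∫ ω, x ω i * y ω jk ∂μ)
    (Eyy : Matrix ((j : Fin p) × Fin (n j)) ((j : Fin p) × Fin (n j)) ℝ)
    (hEyy : ∀ jk jk', Eyy jk jk' = ∫ ω, y ω jk * y ω jk' ∂μ)
    (S : Matrix ((j : Fin p) × Fin (n j)) ((j : Fin p) × Fin (n j)) ℝ)
    (hS : S.PosSemidef) (hSS : S * S = Eyy)
    (B : Matrix ((j : Fin p) × Fin (n j)) ((j : Fin p) × Fin (n j)) ℝ)
    (hB : IsMoorePenrose S B)
    (H : Matrix (Fin m) ((j : Fin p) × Fin (n j)) ℝ) (hH : H = Exy * B)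
    -- the row blocks `G_j` of `S`, conforming to the partition of `y`
    (G : ∀ j : Fin p, Matrix (Fin (n j)) ((j : Fin p) × Fin (n j)) ℝ)
    (hG : ∀ (j : Fin p) (k : Fin (n j)) l, G j k l = S ⟨j, k⟩ l)
    (r : Fin p → ℕ) :
    (∀ F : ∀ j : Fin p, Matrix (Fin m) (Fin (n j)) ℝ,
      ∫ ω, ∑ i, (x ω i - ∑ j, (F j).mulVec (yblk j ω) i) ^ 2 ∂μ =
        Exx.trace - frobNorm H ^ 2 + frobNorm (H - ∑ j, F j * G j) ^ 2) ∧
    sInf {e : ℝ | ∃ F : ∀ j : Fin p, Matrix (Fin m) (Fin (n j)) ℝ,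
        (∀ j, (F j).rank ≤ r j) ∧
        e = ∫ ω, ∑ i, (x ω i - ∑ j, (F j).mulVec (yblk j ω) i) ^ 2 ∂μ} =
      Exx.trace - frobNorm H ^ 2 +
        sInf {e : ℝ | ∃ F : ∀ j : Fin p, Matrix (Fin m) (Fin (n j)) ℝ,
          (∀ j, (F j).rank ≤ r j) ∧ e = frobNorm (H - ∑ j, F j * G j) ^ 2} :=
  distributed_mse_frobenius_reduction_general μ n x yblk y hy_concat hx hy Exx hExx Exy hExy Eyy
    hEyy S hS hSS B hB H hH G hG r
end
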